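/- arXiv:1812.03599 — 2 statements merged into one kernel-verified Lean document; each statement's English description precedes it below -/
import Mathlib

section
/- Let η ∈ [0,1] with η ≠ 1/2, and let φ(z) = max(1-z, 0) be the hinge loss. Then the function f ↦ η·φ(f) + (1-η)·φ(-f) over f ∈ [-1, 1] attains its minimum at f = sign(2η - 1), where sign(t) = 1 if t > 0 and -1 if t < 0. -/
/-! On `[-1, 1]` neither hinge is active, so the conditional risk is the affine function
`1 - (2η - 1) f`. Since `(2η - 1) f ≤ |2η - 1|` there, it is minimized at the endpoint
`f = sign (2η - 1)`, where it equals `1 - |2η - 1|`. -/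

open Set

def condHingeRisk (η f : ℝ) : ℝ := η * max (1 - f) 0 + (1 - η) * max (1 + f) 0

lemma condHingeRisk_eq_of_mem_Icc (η : ℝ) {f : ℝ} (hf : f ∈ Icc (-1 : ℝ) 1) :
    condHingeRisk η f = 1 - (2 * η - 1) * f := by
  obtain ⟨hf₁, hf₂⟩ := hf
  rw [condHingeRisk, max_eq_left (by linarith), max_eq_left (by linarith)]
  ring

lemma mul_le_abs_of_mem_Icc (c : ℝ) {f : ℝ} (hf : f ∈ Icc (-1 : ℝ) 1) : c * f ≤ |c| :=
  calc c * f ≤ |c * f| := le_abs_self _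
    _ = |c| * |f| := abs_mul c f
    _ ≤ |c| * 1 := by gcongr; exact abs_le.mpr hf
    _ = |c| := mul_one _

lemma mul_ite_pos_one_neg_one_eq_abs (c : ℝ) : c * (if c > 0 then (1 : ℝ) else -1) = |c| := by
  split_ifs with hc
  · rw [mul_one, abs_of_pos hc]
  · rw [mul_neg_one, abs_of_nonpos (not_lt.mp hc)]

theorem hinge_risk_minimizer_general (η : ℝ) :
    ∀ f ∈ Set.Icc (-1 : ℝ) 1,
      η * max (1 - (if 2 * η - 1 > 0 then (1 : ℝ) else -1)) 0
        + (1 - η) * max (1 + (if 2 * η - 1 > 0 then (1 : ℝ) else -1)) 0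
      ≤ η * max (1 - f) 0 + (1 - η) * max (1 + f) 0 := by
  intro f hf
  set s : ℝ := if 2 * η - 1 > 0 then 1 else -1 with hs_def
  have hs : s ∈ Icc (-1 : ℝ) 1 := by rw [hs_def]; split_ifs <;> norm_num
  change condHingeRisk η s ≤ condHingeRisk η f
  rw [condHingeRisk_eq_of_mem_Icc η hs, condHingeRisk_eq_of_mem_Icc η hf,
    hs_def, mul_ite_pos_one_neg_one_eq_abs]
  linarith [mul_le_abs_of_mem_Icc (2 * η - 1) hf]

/-- For `η ∈ [0,1]` with `η ≠ 1/2`, the conditional hinge risk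
`f ↦ η·max(1-f,0) + (1-η)·max(1+f,0)` over `f ∈ [-1,1]` attains its minimum at
`f = sign (2η - 1)`. -/
theorem hinge_risk_minimizer (η : ℝ) (hη : η ∈ Set.Icc (0 : ℝ) 1) (hη2 : η ≠ 1 / 2) :
    ∀ f ∈ Set.Icc (-1 : ℝ) 1,
      η * max (1 - (if 2 * η - 1 > 0 then (1 : ℝ) else -1)) 0
        + (1 - η) * max (1 + (if 2 * η - 1 > 0 then (1 : ℝ) else -1)) 0
      ≤ η * max (1 - f) 0 + (1 - η) * max (1 + f) 0 :=
  hinge_risk_minimizer_general η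
end

section
/- Let η ∈ (0,1) with |log(η/(1-η))| > F for some F ≥ 1. Then the minimal conditional logistic risk satisfies η·log(1+e^{-f*}) + (1-η)·log(1+e^{f*}) ≤ log(1 + e^{-F}) + log(1 + e^{F})/(1 + e^{F}) ≤ 2(F+1)e^{-F}, where f* = log(η/(1-η)). -/
/-!
Writing `t = log (η / (1 - η))`, one has `1 - η = 1 / (1 + eᵗ)` and `η = 1 / (1 + e⁻ᵗ)`, so the risk
is `h (-t) + h t` with `h s = log (1 + eˢ) / (1 + eˢ)`, which is symmetric in `t`. For `s = |t| > F`,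
the term `h (-s)` is at most `log (1 + e⁻ˢ) ≤ log (1 + e⁻ᶠ)`, and `h s ≤ h F` because `log x / x`
decreases for `x ≥ e`. The explicit bound then follows from `log (1 + x) ≤ x` and
`log (1 + eᶠ) ≤ F + 1`.
-/

open Real

lemma one_sub_mul_one_add_exp_log_div {p : ℝ} (hp₀ : 0 < p) (hp₁ : p < 1) :
    (1 - p) * (1 + exp (log (p / (1 - p)))) = 1 := by
  have hq : 0 < 1 - p := by linarith
  rw [exp_log (div_pos hp₀ hq)]
  field_simp
  ring

lemma mul_one_add_exp_neg_log_div {p : ℝ} (hp₀ : 0 < p) (hp₁ : p < 1) :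
    p * (1 + exp (-log (p / (1 - p)))) = 1 := by
  have h := one_sub_mul_one_add_exp_log_div (p := 1 - p) (by linarith) (by linarith)
  rwa [sub_sub_cancel, ← inv_div, log_inv] at h

lemma mul_log_eq_div_of_mul_eq_one {w x : ℝ} (h : w * x = 1) : w * log x = log x / x := by
  rw [eq_div_iff (left_ne_zero_of_mul_eq_one (by rwa [mul_comm])), mul_right_comm, h, one_mul]

lemma log_odds_risk_eq {η : ℝ} (hη : η ∈ Set.Ioo (0 : ℝ) 1) :
    η * log (1 + exp (-log (η / (1 - η)))) + (1 - η) * log (1 + exp (log (η / (1 - η))))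
      = log (1 + exp (-log (η / (1 - η)))) / (1 + exp (-log (η / (1 - η))))
        + log (1 + exp (log (η / (1 - η)))) / (1 + exp (log (η / (1 - η)))) := by
  rw [mul_log_eq_div_of_mul_eq_one (mul_one_add_exp_neg_log_div hη.1 hη.2),
    mul_log_eq_div_of_mul_eq_one (one_sub_mul_one_add_exp_log_div hη.1 hη.2)]

lemma log_one_add_exp_div_le_log_one_add_exp (s : ℝ) :
    log (1 + exp s) / (1 + exp s) ≤ log (1 + exp s) :=
  div_le_self (log_nonneg (by linarith [exp_pos s])) (by linarith [exp_pos s])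

lemma log_one_add_exp_div_le_of_le {s s' : ℝ} (he : exp 1 ≤ 1 + exp s) (hss' : s ≤ s') :
    log (1 + exp s') / (1 + exp s') ≤ log (1 + exp s) / (1 + exp s) := by
  have hexp : 1 + exp s ≤ 1 + exp s' := by gcongr
  exact log_div_self_antitoneOn he (he.trans hexp) hexp

lemma log_one_add_exp_neg_div_add_div_le {F s : ℝ} (hF : 1 ≤ F) (hFs : F ≤ s) :
    log (1 + exp (-s)) / (1 + exp (-s)) + log (1 + exp s) / (1 + exp s)
      ≤ log (1 + exp (-F)) + log (1 + exp F) / (1 + exp F) := by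
  have he : exp 1 ≤ 1 + exp F := by linarith [exp_le_exp.mpr hF]
  have hneg : log (1 + exp (-s)) ≤ log (1 + exp (-F)) := by gcongr
  linarith [log_one_add_exp_div_le_log_one_add_exp (-s), log_one_add_exp_div_le_of_le he hFs]

lemma log_one_add_exp_le_add_one {F : ℝ} (hF : 0 ≤ F) : log (1 + exp F) ≤ F + 1 := by
  have h2e : (2 : ℝ) ≤ exp 1 := by linarith [add_one_le_exp (1 : ℝ)]
  have hle : 1 + exp F ≤ exp (F + 1) := by
    rw [exp_add]
    nlinarith [one_le_exp hF]
  simpa using log_le_log (by positivity) hle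

lemma log_one_add_exp_neg_add_div_le {F : ℝ} (hF : 0 ≤ F) :
    log (1 + exp (-F)) + log (1 + exp F) / (1 + exp F) ≤ 2 * (F + 1) * exp (-F) := by
  have hneg : log (1 + exp (-F)) ≤ exp (-F) := by
    linarith [log_le_sub_one_of_pos (x := 1 + exp (-F)) (by positivity)]
  have hpos : log (1 + exp F) / (1 + exp F) ≤ (F + 1) * exp (-F) := by
    rw [exp_neg, ← div_eq_mul_inv]
    exact div_le_div₀ (by linarith) (log_one_add_exp_le_add_one hF) (exp_pos F)
      (by linarith [exp_pos F])
  nlinarith [exp_pos (-F)]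

/-- If `η ∈ (0,1)` has extreme log-odds `|log(η/(1-η))| > F` with `F ≥ 1`, then the
minimal conditional logistic risk is at most `log(1+e^{-F}) + log(1+e^F)/(1+e^F)`,
which is at most `2(F+1)e^{-F}`. -/
theorem extreme_logistic_risk_bound (η F : ℝ) (hη : η ∈ Set.Ioo (0 : ℝ) 1)
    (hF : 1 ≤ F) (hext : |Real.log (η / (1 - η))| > F) :
    η * Real.log (1 + Real.exp (-(Real.log (η / (1 - η)))))
        + (1 - η) * Real.log (1 + Real.exp (Real.log (η / (1 - η))))
      ≤ Real.log (1 + Real.exp (-F)) + Real.log (1 + Real.exp F) / (1 + Real.exp F)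
    ∧ Real.log (1 + Real.exp (-F)) + Real.log (1 + Real.exp F) / (1 + Real.exp F)
      ≤ 2 * (F + 1) * Real.exp (-F) := by
  refine ⟨?_, log_one_add_exp_neg_add_div_le (by linarith)⟩
  rw [log_odds_risk_eq hη]
  set t := log (η / (1 - η))
  rcases abs_choice t with ht | ht
  · rw [ht] at hext
    exact log_one_add_exp_neg_div_add_div_le hF hext.le
  · rw [ht] at hext
    simpa only [neg_neg, add_comm] using log_one_add_exp_neg_div_add_div_le hF hext.le
end
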